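/- arXiv:0707.3313 — 4 statements merged into one kernel-verified Lean document; each statement's English description precedes it below -/
import Mathlib

section
/- Let E/F be a degree-n extension of finite fields of odd characteristic, and let τ ∈ Gal(E/F) satisfy τ² = 1. Let Δ be the determinant of the F-bilinear form on E given by (t₁, t₂) ↦ Tr_{E/F}(t₁·τ(t₂)) (with respect to any F-basis of E). Then sgn_F(Δ) = (−sgn_F(sgn_{Gal(E/F)}(τ)))^{n+1}, where sgn_F is the unique quadratic character of F× (extended by sgn_F of a square class being well-defined since Δ is determined up to squares), and sgn_{Gal(E/F)} is the unique character of the cyclic group Gal(E/F) whose kernel is the subgroup of squares. -/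
/-!
Index the Galois group by the basis `b` and let `A = (σⱼ (bᵢ))` be the matrix of conjugates.
Since `Tr = ∑ σ`, the twisted trace matrix is `A · (A with its columns permuted by σ ↦ σ τ)ᵀ`,
so `Δ = sgn(· τ) · det(A)²`, the sign being that of right translation by `τ` on `Gal(E/F)`.
The Frobenius permutes the columns of `A` by a translation by a generator, which is an `n`-cycle,
so `det(A)^(q - 1) = (-1)^(n + 1)`; as `det(A)² ∈ F`, its quadratic character is `(-1)^(n + 1)`.
Finally, in a cyclic group a translation is an even permutation exactly when it translates by a
square, so `sgn(· τ) = sgn_Gal(τ)`, and `sgn_Gal(τ)ⁿ = 1` turns the product into the stated power.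
-/

open Equiv.Perm Matrix

theorem isSquare_of_odd_card {G : Type*} [Group G] [Fintype G] (hG : Odd (Fintype.card G))
    (x : G) : IsSquare x := by
  have hcop : (Nat.card G).Coprime 2 := by
    rw [Nat.card_eq_fintype_card, Nat.coprime_two_right]; exact hG
  obtain ⟨y, rfl⟩ := hcop.pow_left_bijective.2 x
  exact ⟨y, sq y⟩

namespace Equiv.Perm

variable {G : Type*} [Group G] [Fintype G] [DecidableEq G]

theorem sign_mulLeft (g : G) : sign (Equiv.mulLeft g) = sign (Equiv.mulRight g) := by
  -- inversion conjugates `g * ·` into `· * g⁻¹`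
  rw [sign_eq_sign_of_equiv _ (Equiv.mulRight g⁻¹) (Equiv.inv G) fun x => _root_.mul_inv_rev g x,
    ← inv_mulRight, sign_inv]

theorem sign_mulRight_pow_card (g : G) : sign (Equiv.mulRight g) ^ Fintype.card G = 1 := by
  rw [← map_pow, pow_mulRight, pow_card_eq_one, mulRight_one, map_one]

theorem sign_mulRight_of_forall_mem_zpowers {g : G} (hg : ∀ x, x ∈ Subgroup.zpowers g) :
    sign (Equiv.mulRight g) = (-1) ^ (Fintype.card G + 1) := by
  by_cases h1 : g = 1
  · have : Fintype.card G = 1 := Fintype.card_eq_one_iff.2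
      ⟨1, fun x => by obtain ⟨k, rfl⟩ := hg x; simp [h1]⟩
    simp [h1, this]
  · have hsupp : (Equiv.mulRight g).support = Finset.univ := by
      ext x; simpa using h1
    have hcycle : (Equiv.mulRight g).IsCycle := by
      refine ⟨1, by simpa using h1, fun y _ => ?_⟩
      obtain ⟨k, rfl⟩ := hg y
      exact ⟨k, by simp⟩
    rw [hcycle.sign, hsupp, Finset.card_univ, pow_succ, mul_neg_one]

theorem sign_mulRight_eq_one_iff_isSquare [IsCyclic G] (x : G) :
    sign (Equiv.mulRight x) = 1 ↔ IsSquare x := by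
  constructor
  · intro hx
    rcases Nat.even_or_odd (Fintype.card G) with hG | hG
    · obtain ⟨g, hg⟩ := IsCyclic.exists_generator (α := G)
      obtain ⟨k, rfl⟩ := Subgroup.mem_zpowers_iff.1 (hg x)
      rw [← zpow_mulRight, map_zpow, sign_mulRight_of_forall_mem_zpowers hg,
        hG.add_one.neg_one_pow] at hx
      rcases Int.even_or_odd k with hk | hk
      · exact hk.isSquare_zpow g
      · rw [hk.neg_one_zpow] at hx; exact absurd hx (by decide)
    · exact isSquare_of_odd_card hG x
  · rintro ⟨y, rfl⟩
    rw [mulRight_mul, sign_mul, Int.units_mul_self]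

theorem sign_mulRight_eq_ite [IsCyclic G] (x : G) :
    sign (Equiv.mulRight x) = if IsSquare x then 1 else -1 := by
  split_ifs with h
  · exact (sign_mulRight_eq_one_iff_isSquare x).2 h
  · exact (Int.units_eq_one_or _).resolve_left (mt (sign_mulRight_eq_one_iff_isSquare x).1 h)

end Equiv.Perm

namespace Algebra

variable {K L ι : Type*} [Field K] [Field L] [Algebra K L] [FiniteDimensional K L]
  [DecidableEq Gal(L/K)] [Fintype ι] [DecidableEq ι]

noncomputable def twistedTraceMatrix (b : ι → L) (g : Gal(L/K)) : Matrix ι ι K :=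
  Matrix.of fun i j => trace K L (b i * g (b j))

def conjMatrix (b : ι → L) (e : ι ≃ Gal(L/K)) : Matrix ι ι L :=
  Matrix.of fun i j => e j (b i)

theorem map_det_conjMatrix (b : ι → L) (e : ι ≃ Gal(L/K)) (σ : Gal(L/K)) :
    σ (conjMatrix b e).det = sign (Equiv.mulLeft σ) * (conjMatrix b e).det := by
  have hmap : (conjMatrix b e).map σ =
      (conjMatrix b e).submatrix _root_.id (e.symm.permCongr (Equiv.mulLeft σ)) := by
    ext i j
    simp [conjMatrix, Equiv.permCongr_apply]
  rw [← sign_permCongr e.symm, ← det_permute', ← hmap]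
  exact RingHom.map_det (σ : L →+* L) _

variable [IsGalois K L]

theorem algebraMap_det_twistedTraceMatrix (b : ι → L) (e : ι ≃ Gal(L/K)) (g : Gal(L/K)) :
    algebraMap K L (twistedTraceMatrix b g).det =
      sign (Equiv.mulRight g) * (conjMatrix b e).det ^ 2 := by
  have hmap : (twistedTraceMatrix b g).map (algebraMap K L) =
      conjMatrix b e *
        ((conjMatrix b e).submatrix _root_.id (e.symm.permCongr (Equiv.mulRight g)))ᵀ := by
    ext i j
    rw [map_apply, twistedTraceMatrix, of_apply, trace_eq_sum_automorphisms, Matrix.mul_apply,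
      ← e.sum_comp]
    simp [conjMatrix, Equiv.permCongr_apply]
  rw [RingHom.map_det, RingHom.mapMatrix_apply, hmap, det_mul, det_transpose, det_permute',
    sign_permCongr]
  ring

theorem det_conjMatrix_ne_zero (b : Module.Basis ι K L) (e : ι ≃ Gal(L/K)) :
    (conjMatrix b e).det ≠ 0 := by
  have h := algebraMap_det_twistedTraceMatrix b e 1
  simp only [Equiv.mulRight_one, Equiv.Perm.sign_one] at h
  intro h0
  apply discr_not_zero_of_basis K b
  rw [discr_def, ← (algebraMap K L).injective.eq_iff, map_zero]
  convert h using 3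
  · ext i j; simp [twistedTraceMatrix, traceMatrix_apply, traceForm_apply]
  · simp [h0]

end Algebra

namespace FiniteField

open Algebra

variable {K L ι : Type*} [Field K] [Field L] [Fintype K] [Fintype L] [Algebra K L]
  [DecidableEq Gal(L/K)] [Fintype ι] [DecidableEq ι]

theorem quadraticChar_eq_of_pow_card_div_two_eq [DecidableEq K] (hK : ringChar K ≠ 2)
    {a : K} {u : ℤ} (hu : u = 1 ∨ u = -1) (h : a ^ (Fintype.card K / 2) = u) :
    quadraticChar K a = u := by
  have ha : a ≠ 0 := by
    rintro rfl
    rw [zero_pow (Nat.div_pos Fintype.one_lt_card two_pos).ne'] at h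
    rcases hu with rfl | rfl <;> simp at h
  refine Int.cast_injOn_of_ringChar_ne_two hK ?_ ?_ (h ▸ quadraticChar_eq_pow_of_char_ne_two' hK a)
  · rcases quadraticChar_dichotomy ha with hχ | hχ <;> simp [hχ]
  · rcases hu with rfl | rfl <;> simp

theorem det_conjMatrix_pow_card_sub_one (b : Module.Basis ι K L) (e : ι ≃ Gal(L/K)) :
    (conjMatrix b e).det ^ (Fintype.card K - 1) = (-1) ^ (Module.finrank K L + 1) := by
  set φ := frobeniusAlgEquivOfAlgebraic K L
  have hφ : ∀ σ, σ ∈ Subgroup.zpowers φ := fun σ => by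
    obtain ⟨m, rfl⟩ := (bijective_frobeniusAlgEquivOfAlgebraic_pow K L).2 σ
    exact Subgroup.npow_mem_zpowers φ m
  have hcard : Fintype.card Gal(L/K) = Module.finrank K L := by
    rw [← Nat.card_eq_fintype_card, IsGalois.card_aut_eq_finrank]
  have hfrob : (conjMatrix b e).det ^ Fintype.card K =
      (-1) ^ (Module.finrank K L + 1) * (conjMatrix b e).det := by
    rw [← frobeniusAlgEquivOfAlgebraic_apply K L, map_det_conjMatrix, sign_mulLeft,
      sign_mulRight_of_forall_mem_zpowers hφ, hcard]
    push_cast; rfl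
  refine mul_right_cancel₀ (det_conjMatrix_ne_zero b e) ?_
  rw [← pow_succ, Nat.sub_add_cancel Fintype.card_pos, hfrob]

theorem quadraticChar_det_twistedTraceMatrix [DecidableEq K] (hK : ringChar K ≠ 2)
    (b : Module.Basis ι K L) (g : Gal(L/K)) :
    quadraticChar K (twistedTraceMatrix b g).det =
      quadraticChar K ((sign (Equiv.mulRight g) : ℤ) : K) * (-1) ^ (Module.finrank K L + 1) := by
  obtain ⟨e⟩ : Nonempty (ι ≃ Gal(L/K)) := by
    rw [← Fintype.card_eq, ← Module.finrank_eq_card_basis b, ← Nat.card_eq_fintype_card,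
      IsGalois.card_aut_eq_finrank]
  set s : K := ((sign (Equiv.mulRight g) : ℤ) : K)
  set Δ := (twistedTraceMatrix b g).det
  have hs : s * s = 1 := by rw [← Int.cast_mul, ← Units.val_mul, Int.units_mul_self]; simp
  have hsΔ : algebraMap K L (s * Δ) = (conjMatrix b e).det ^ 2 := by
    rw [map_mul, algebraMap_det_twistedTraceMatrix b e, map_intCast, ← mul_assoc, ← Int.cast_mul,
      ← Units.val_mul, Int.units_mul_self, Units.val_one, Int.cast_one, one_mul]
  have hpow : (s * Δ) ^ (Fintype.card K / 2) = ((-1) ^ (Module.finrank K L + 1) : ℤ) := by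
    apply (algebraMap K L).injective
    rw [map_pow, hsΔ, ← pow_mul, Nat.two_mul_odd_div_two (odd_card_of_char_ne_two hK),
      det_conjMatrix_pow_card_sub_one]
    simp
  calc quadraticChar K Δ = quadraticChar K (s * (s * Δ)) := by rw [← mul_assoc, hs, one_mul]
    _ = _ := by
      rw [map_mul, quadraticChar_eq_of_pow_card_div_two_eq hK (neg_one_pow_eq_or ℤ _) hpow]

end FiniteField

open scoped Classical

open FiniteField Algebra in
theorem stmt_0_general (F E : Type*) [Field F] [Field E] [Fintype F] [Fintype E]
    [Algebra F E] (p : ℕ) (hp : Odd p) [CharP F p]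
    (n : ℕ) (hn : Module.finrank F E = n)
    (τ : E ≃ₐ[F] E)
    (b : Module.Basis (Fin n) F E)
    (Δ : F)
    (hΔ : Δ = Matrix.det (Matrix.of fun i j : Fin n =>
      Algebra.trace F E (b i * τ (b j))))
    (sgnF : F → ℤ)
    (hsgnF : ∀ a : F, a ≠ 0 → sgnF a = if IsSquare a then 1 else -1)
    (sgnGal : (E ≃ₐ[F] E) → ℤ)
    (hsgnGal : ∀ g : E ≃ₐ[F] E, sgnGal g = if IsSquare g then 1 else -1) :
    sgnF Δ = (-(sgnF ((sgnGal τ : ℤ) : F))) ^ (n + 1) := by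
  have hF : ringChar F ≠ 2 := by
    rw [ringChar.eq F p]; rintro rfl; exact Nat.not_odd_iff_even.2 even_two hp
  have hsgnF_eq : ∀ a : F, a ≠ 0 → sgnF a = quadraticChar F a := fun a ha => by
    simp [hsgnF a ha, quadraticChar_apply, quadraticCharFun, ha]
  have hτ : sgnGal τ = sign (Equiv.mulRight τ) := by
    rw [hsgnGal, sign_mulRight_eq_ite]; split_ifs <;> rfl
  have hχΔ : quadraticChar F Δ = _ := hΔ ▸ quadraticChar_det_twistedTraceMatrix hF b τ
  set s : F := ((sign (Equiv.mulRight τ) : ℤ) : F)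
  have hs0 : s ≠ 0 := by
    rcases Int.units_eq_one_or (sign (Equiv.mulRight τ)) with h | h <;> simp [s, h]
  have hsn : s ^ n = 1 := by
    have hcard : Fintype.card Gal(E/F) = n := by
      rw [← Nat.card_eq_fintype_card, IsGalois.card_aut_eq_finrank, hn]
    rw [← Int.cast_pow, ← Units.val_pow_eq_pow_val, ← hcard, sign_mulRight_pow_card, Units.val_one,
      Int.cast_one]
  have hΔ0 : Δ ≠ 0 := by
    rw [Ne, ← quadraticChar_eq_zero_iff (F := F), hχΔ]
    exact mul_ne_zero (quadraticChar_eq_zero_iff.not.2 hs0) (pow_ne_zero _ (by norm_num))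
  rw [hτ, hsgnF_eq Δ hΔ0, hsgnF_eq s hs0, hχΔ, hn, neg_pow (quadraticChar F s),
    pow_succ (quadraticChar F s), ← map_pow, hsn, map_one, one_mul, mul_comm]

/-- Lemma 3.1 (gen-trace): sign of the determinant of the twisted trace form of a
degree-`n` extension of odd-characteristic finite fields. -/
theorem stmt_0 (F E : Type*) [Field F] [Field E] [Fintype F] [Fintype E]
    [Algebra F E] (p : ℕ) [Fact p.Prime] (hp : Odd p) [CharP F p]
    (n : ℕ) (hn : Module.finrank F E = n)
    (τ : E ≃ₐ[F] E) (hτ : τ * τ = 1)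
    (b : Module.Basis (Fin n) F E)
    (Δ : F)
    (hΔ : Δ = Matrix.det (Matrix.of fun i j : Fin n =>
      Algebra.trace F E (b i * τ (b j))))
    (sgnF : F → ℤ)
    (hsgnF : ∀ a : F, a ≠ 0 → sgnF a = if IsSquare a then 1 else -1)
    (sgnGal : (E ≃ₐ[F] E) → ℤ)
    (hsgnGal : ∀ g : E ≃ₐ[F] E, sgnGal g = if IsSquare g then 1 else -1) :
    sgnF Δ = (-(sgnF ((sgnGal τ : ℤ) : F))) ^ (n + 1) :=
  stmt_0_general F E p hp n hn τ b Δ hΔ sgnF hsgnF sgnGal hsgnGal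
end

section
/- Let F be a finite field of odd characteristic with τ = 1, ε = 1, i.e., B a non-degenerate symmetric bilinear form on an F-vector space V, and let V = V₊ ⊕ V₀ ⊕ V₋ be a Witt decomposition with V₀ anisotropic for Q(v) = B(v,v). If −1 is a square in F×, then any orthogonal basis {v} of V₀ has the property that the values Q(v) lie in pairwise distinct square classes of F×; consequently |basis of V₀| ≤ 2. -/
/-!
If `-1 = s²` and `b i`, `b j` are orthogonal with `Q (b j) = c² Q (b i)`, then
`Q (b j + s c • b i) = Q (b j) - c² Q (b i) = 0`, so anisotropy forces the nonzero vector
`b j + s c • b i` to vanish. Hence the `Q (b i)` lie in pairwise distinct square classes, and a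
finite field has at most two classes of nonzero elements modulo squares (the fibres of the
quadratic character).
-/

namespace FiniteField

variable {F : Type*} [Field F] [Fintype F] [DecidableEq F]

theorem exists_sq_mul_eq_of_quadraticChar_eq {a b : F} (ha : a ≠ 0) (hb : b ≠ 0)
    (h : quadraticChar F a = quadraticChar F b) : ∃ c ≠ 0, b = c ^ 2 * a := by
  have hab : IsSquare (a * b) := by
    rw [← quadraticChar_one_iff_isSquare (mul_ne_zero ha hb), map_mul, ← h, ← sq,
      quadraticChar_sq_one ha]
  obtain ⟨r, hr⟩ := hab
  have hr0 : r ≠ 0 := by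
    rintro rfl
    exact mul_ne_zero ha hb (by simpa using hr)
  refine ⟨r / a, div_ne_zero hr0 ha, ?_⟩
  field_simp
  linear_combination hr

theorem exists_ne_sq_mul_eq_of_two_lt_card {ι : Type*} [Fintype ι] (x : ι → F)
    (hx : ∀ i, x i ≠ 0) (hcard : 2 < Fintype.card ι) :
    ∃ i j, i ≠ j ∧ ∃ c ≠ 0, x j = c ^ 2 * x i := by
  have hmaps : ∀ i ∈ Finset.univ, quadraticChar F (x i) ∈ ({1, -1} : Finset ℤ) := fun i _ => by
    simpa using quadraticChar_dichotomy (hx i)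
  obtain ⟨i, -, j, -, hij, hχ⟩ :=
    Finset.exists_ne_map_eq_of_card_lt_of_maps_to (by simpa using hcard) hmaps
  exact ⟨i, j, hij, exists_sq_mul_eq_of_quadraticChar_eq (hx i) (hx j) hχ⟩

end FiniteField

namespace LinearMap

variable {R M : Type*} [CommRing R] [AddCommGroup M] [Module R M]

theorem apply_add_smul_self_eq_zero_of_sq_mul_eq (B : M →ₗ[R] M →ₗ[R] R) {v w : M}
    (hvw : B v w = 0) (hwv : B w v = 0) {s c : R} (hs : -1 = s * s)
    (hQ : B w w = c ^ 2 * B v v) : B (w + (s * c) • v) (w + (s * c) • v) = 0 := by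
  simp only [map_add, map_smul, add_apply, smul_apply, smul_eq_mul, hvw, hwv, hQ]
  linear_combination (-(c ^ 2 * B v v)) * hs

variable {F V : Type*} [Field F] [AddCommGroup V] [Module F V] (B : V →ₗ[F] V →ₗ[F] F)
  {W : Submodule F V} {ι : Type*} (b : Module.Basis ι F W)

theorem apply_basis_self_ne_zero_of_anisotropic (haniso : ∀ v ∈ W, B v v = 0 → v = 0) (i : ι) :
    B (b i) (b i) ≠ 0 := fun h =>
  b.ne_zero i (Subtype.ext (haniso _ (b i).2 h))

theorem not_exists_sq_mul_eq_of_anisotropic (haniso : ∀ v ∈ W, B v v = 0 → v = 0)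
    (hsq : IsSquare (-1 : F))
    (horth : ∀ i j, i ≠ j → B (b i) (b j) = 0) {i j : ι} (hij : i ≠ j) :
    ¬ ∃ c : F, c ≠ 0 ∧ B (b j) (b j) = c ^ 2 * B (b i) (b i) := by
  classical
  rintro ⟨c, -, hQ⟩
  obtain ⟨s, hs⟩ := hsq
  have hzero : b j + (s * c) • b i = 0 := Subtype.ext <| by
    simpa using haniso _ (W.add_mem (b j).2 (W.smul_mem _ (b i).2))
      (apply_add_smul_self_eq_zero_of_sq_mul_eq B (horth i j hij) (horth j i hij.symm) hs hQ)
  simpa [Finsupp.single_apply, hij] using congrArg (fun x => b.repr x j) hzero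

end LinearMap

theorem stmt_2_general (F : Type*) [Field F] [Fintype F]
    (V : Type*) [AddCommGroup V] [Module F V]
    (B : V →ₗ[F] V →ₗ[F] F)
    (V0 : Submodule F V)
    (haniso : ∀ v ∈ V0, B v v = 0 → v = 0)
    (hsq : IsSquare (-1 : F))
    (ι : Type*) [Fintype ι] (b : Module.Basis ι F V0)
    (horth : ∀ i j, i ≠ j → B (↑(b i)) (↑(b j)) = 0) :
    (∀ i j, i ≠ j → ¬ ∃ c : F, c ≠ 0 ∧
        B (↑(b j)) (↑(b j)) = c ^ 2 * B (↑(b i)) (↑(b i))) ∧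
    Fintype.card ι ≤ 2 := by
  classical
  have hdistinct := fun i j (hij : i ≠ j) =>
    B.not_exists_sq_mul_eq_of_anisotropic b haniso hsq horth hij
  refine ⟨hdistinct, not_lt.mp fun hcard => ?_⟩
  obtain ⟨i, j, hij, hQ⟩ := FiniteField.exists_ne_sq_mul_eq_of_two_lt_card
    (fun i => B (b i) (b i)) (B.apply_basis_self_ne_zero_of_anisotropic b haniso) hcard
  exact hdistinct i j hij hQ

/-- In a Witt decomposition over a finite field of odd characteristic in which `-1`
is a square, the diagonal values of an orthogonal basis of the anisotropic part lie
in pairwise distinct square classes; hence the anisotropic part has dimension at most 2. -/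
theorem stmt_2 (F : Type*) [Field F] [Fintype F]
    (p : ℕ) [Fact p.Prime] (hp : Odd p) [CharP F p]
    (V : Type*) [AddCommGroup V] [Module F V] [FiniteDimensional F V]
    (B : V →ₗ[F] V →ₗ[F] F)
    (hsymm : ∀ v w, B v w = B w v)
    (hnd : ∀ v, (∀ w, B v w = 0) → v = 0)
    (Vp V0 Vm : Submodule F V)
    (hinternal : DirectSum.IsInternal ![Vp, V0, Vm])
    (hisoP : ∀ v ∈ Vp, B v v = 0)
    (hisoM : ∀ v ∈ Vm, B v v = 0)
    (haniso : ∀ v ∈ V0, B v v = 0 → v = 0)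
    (hperp : ∀ v ∈ V0, ∀ w : V, (w ∈ Vp ∨ w ∈ Vm) → B v w = 0)
    (hsq : IsSquare (-1 : F))
    (ι : Type*) [Fintype ι] (b : Module.Basis ι F V0)
    (horth : ∀ i j, i ≠ j → B (↑(b i)) (↑(b j)) = 0) :
    (∀ i j, i ≠ j → ¬ ∃ c : F, c ≠ 0 ∧
        B (↑(b j)) (↑(b j)) = c ^ 2 * B (↑(b i)) (↑(b i))) ∧
    Fintype.card ι ≤ 2 :=
  stmt_2_general F V B V0 haniso hsq ι b horth
end

section
/- Let E/F be an extension of finite fields of odd characteristic, σ an automorphism of E with σ² = 1 whose restriction to E is non-trivial (so the fixed field E^σ is the unique index-2 subfield), and let γ ∈ E× satisfy σ(γ) = γ^{−1} and γ ≠ ±1. Let K = F_p[γ] ⊆ E be the subfield generated by γ over the prime field. Then: (a) σ is non-trivial on K; (b) K is not contained in E^σ, hence [E : K] is odd; (c) if Q = |K^σ| then γ^{Q+1} = 1, and consequently sgn_K(γ) = 1, i.e., γ is a square in K×. -/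
open Polynomial

/-- In a finite field, an element outside a subfield `F` cannot satisfy `x ^ |F| = x`. -/
lemma aux_pow_card_ne {E : Type*} [Field E] [Fintype E] (F : Subfield E)
    (γ : E) (hγ : γ ∉ F) : γ ^ (Nat.card F) ≠ γ := by
  classical
  set N := Nat.card F with hN
  have hNcard : N = Fintype.card F := Nat.card_eq_fintype_card
  have hN1 : 1 < N := hNcard ▸ Fintype.one_lt_card
  intro hroot
  set P : E[X] := X ^ N - X with hP
  have hdeg : P.natDegree = N := by
    rw [hP, natDegree_sub_eq_left_of_natDegree_lt] <;> simp <;> omega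
  have hP0 : P ≠ 0 := fun h => by simp [h] at hdeg; omega
  have hrootmem : ∀ x : E, x ^ N = x → x ∈ P.roots := by
    intro x hx
    rw [mem_roots hP0]
    simp [IsRoot, hP, hx]
  set t : Finset E := Finset.univ.filter (fun x => x ∈ F) with ht
  have htcard : t.card = N := by
    rw [hNcard, Fintype.card_subtype]
  have htroot : ∀ x ∈ t, x ^ N = x := by
    intro x hx
    have hxF : x ∈ F := by simpa [ht] using hx
    have := FiniteField.pow_card (⟨x, hxF⟩ : F)
    have := congrArg (Subtype.val) this
    simpa [← hNcard] using this
  have hγt : γ ∉ t := by simp [ht, hγ]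
  have hsub : insert γ t ⊆ P.roots.toFinset := by
    intro x hx
    rw [Multiset.mem_toFinset]
    rcases Finset.mem_insert.mp hx with h | h
    · exact hrootmem _ (h ▸ hroot)
    · exact hrootmem _ (htroot _ h)
  have h1 := Finset.card_le_card hsub
  have h2 := (P.roots.toFinset_card_le).trans (card_roots' P)
  rw [Finset.card_insert_of_notMem hγt, htcard, hdeg] at *
  omega

/-- Adjoining to a subfield `F` of a finite field an element `θ ∉ F` satisfying a monic
quadratic relation over `F` yields a subfield `{a + b θ}` of cardinality `|F|²`. -/
lemma aux_quadratic_subfield {E : Type*} [Field E] [Fintype E] (F : Subfield E)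
    (θ s n : E) (hs : s ∈ F) (hn : n ∈ F) (hθq : θ * θ = s * θ - n) (hθF : θ ∉ F) :
    ∃ R : Subfield E, (∀ x, x ∈ R ↔ ∃ a ∈ F, ∃ b ∈ F, x = a + b * θ) ∧
      Nat.card R = Nat.card F * Nat.card F := by
  classical
  let S : Subring E :=
  { carrier := {x | ∃ a ∈ F, ∃ b ∈ F, x = a + b * θ}
    zero_mem' := ⟨0, zero_mem F, 0, zero_mem F, by ring⟩
    one_mem' := ⟨1, one_mem F, 0, zero_mem F, by ring⟩
    add_mem' := by
      rintro x y ⟨a, ha, b, hb, rfl⟩ ⟨c, hc, d, hd, rfl⟩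
      exact ⟨a + c, add_mem ha hc, b + d, add_mem hb hd, by ring⟩
    neg_mem' := by
      rintro x ⟨a, ha, b, hb, rfl⟩
      exact ⟨-a, neg_mem ha, -b, neg_mem hb, by ring⟩
    mul_mem' := by
      rintro x y ⟨a, ha, b, hb, rfl⟩ ⟨c, hc, d, hd, rfl⟩
      refine ⟨a * c - b * d * n, sub_mem (mul_mem ha hc) (mul_mem (mul_mem hb hd) hn),
        a * d + b * c + b * d * s,
        add_mem (add_mem (mul_mem ha hd) (mul_mem hb hc)) (mul_mem (mul_mem hb hd) hs), ?_⟩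
      linear_combination (b * d) * hθq }
  have hfield := Finite.isField_of_domain S
  let R : Subfield E :=
  { toSubring := S
    inv_mem' := by
      intro x hx
      rcases eq_or_ne x 0 with rfl | hx0
      · simpa using S.zero_mem
      · obtain ⟨y, hy⟩ := hfield.mul_inv_cancel (show (⟨x, hx⟩ : S) ≠ 0 by
          simp [Subtype.ext_iff, hx0])
        have hxy : x * (y : E) = 1 := congrArg Subtype.val hy
        exact (inv_eq_of_mul_eq_one_right hxy) ▸ y.2 }
  have hmem : ∀ x, x ∈ R ↔ ∃ a ∈ F, ∃ b ∈ F, x = a + b * θ := fun x => Iff.rfl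
  refine ⟨R, hmem, ?_⟩
  have hbij : Function.Bijective
      (fun ab : F × F => (⟨(ab.1 : E) + (ab.2 : E) * θ,
        (hmem _).mpr ⟨ab.1, ab.1.2, ab.2, ab.2.2, rfl⟩⟩ : R)) := by
    constructor
    · rintro ⟨⟨a, ha⟩, ⟨b, hb⟩⟩ ⟨⟨c, hc⟩, ⟨d, hd⟩⟩ h
      have h' : a + b * θ = c + d * θ := congrArg Subtype.val h
      have hbd : b = d := by
        by_contra hne
        apply hθF
        have hθval : θ = (c - a) / (b - d) := by
          rw [eq_div_iff (sub_ne_zero.mpr hne)]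
          linear_combination h'
        rw [hθval]
        exact div_mem (sub_mem hc ha) (sub_mem hb hd)
      subst hbd
      have hac : a = c := add_right_cancel h'
      simp [Prod.ext_iff, Subtype.ext_iff, hac]
    · rintro ⟨x, hx⟩
      obtain ⟨a, ha, b, hb, rfl⟩ := (hmem x).mp hx
      exact ⟨(⟨a, ha⟩, ⟨b, hb⟩), rfl⟩
  calc Nat.card R = Nat.card (F × F) := (Nat.card_eq_of_bijective _ hbij).symm
    _ = Nat.card F * Nat.card F := Nat.card_prod _ _

/-- Properties of an element `γ` with `σ(γ) = γ⁻¹`, `γ ≠ ±1`, for an involution `σ`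
of a finite field `E` of odd characteristic: `σ` is non-trivial on `K = F_p(γ)`,
`K` is not contained in the fixed field (so `[E : K]` is odd), and with
`Q = |K^σ|` one has `γ^{Q+1} = 1`, so `γ` is a square in `K`. -/
theorem stmt_8 (E : Type*) [Field E] [Fintype E]
    (p : ℕ) [Fact p.Prime] (hp : Odd p) [CharP E p]
    (σ : E ≃+* E) (hσ2 : ∀ x, σ (σ x) = x) (hσ1 : σ ≠ RingEquiv.refl E)
    (γ : E) (hγ0 : γ ≠ 0) (hσγ : σ γ = γ⁻¹) (hγ1 : γ ≠ 1) (hγm1 : γ ≠ -1)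
    (K : Subfield E) (hK : K = Subfield.closure {γ})
    (Q : ℕ) (hQ : Q = Nat.card {x : E // x ∈ K ∧ σ x = x}) :
    (∃ x ∈ K, σ x ≠ x) ∧
    (¬ ∀ x ∈ K, σ x = x) ∧
    Odd (Module.finrank K E) ∧
    γ ^ (Q + 1) = 1 ∧
    ∃ c ∈ K, c * c = γ := by
  classical
  have hγK : γ ∈ K := by
    rw [hK]; exact Subfield.subset_closure rfl
  -- γ² ≠ 1
  have hγ2 : γ * γ ≠ 1 := by
    intro h
    have : (γ - 1) * (γ + 1) = 0 := by linear_combination h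
    rcases mul_eq_zero.mp this with h' | h'
    · exact hγ1 (sub_eq_zero.mp h')
    · exact hγm1 (eq_neg_of_add_eq_zero_left h')
  have hσne : σ γ ≠ γ := by
    rw [hσγ]
    intro h
    apply hγ2
    calc γ * γ = γ * γ⁻¹ := by rw [h]
      _ = 1 := mul_inv_cancel₀ hγ0
  -- the fixed subfield of σ
  set Fσ : Subfield E := RingHom.eqLocusField (σ : E →+* E) (RingHom.id E) with hFσ
  have hmemFσ : ∀ x : E, x ∈ Fσ ↔ σ x = x := fun x => Iff.rfl
  have hγFσ : γ ∉ Fσ := fun h => hσne ((hmemFσ γ).mp h)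
  set Kσ : Subfield E := K ⊓ Fσ with hKσ
  have hmemKσ : ∀ x : E, x ∈ Kσ ↔ x ∈ K ∧ σ x = x := fun x => Subfield.mem_inf
  have hγKσ : γ ∉ Kσ := fun h => hσne ((hmemKσ γ).mp h).2
  have hKσK : Kσ ≤ K := fun x hx => ((hmemKσ x).mp hx).1
  have hQc : Nat.card Kσ = Q := by
    rw [hQ]
    exact Nat.card_congr (Equiv.subtypeEquivRight fun x => (hmemKσ x))
  -- Q = p ^ k
  obtain ⟨k, -, hk⟩ := FiniteField.card Kσ p
  have hQpk : Q = p ^ (k : ℕ) := by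
    rw [← hQc, Nat.card_eq_fintype_card, hk]
  have hp1 : 1 < p := (Fact.out : p.Prime).one_lt
  have hQ2 : 2 ≤ Q := by
    rw [hQpk]
    calc 2 ≤ p := hp1
      _ = p ^ 1 := (pow_one p).symm
      _ ≤ p ^ (k : ℕ) := Nat.pow_le_pow_right (by omega) k.2
  have hQodd : Odd Q := by rw [hQpk]; exact hp.pow
  -- the trace s = γ + γ⁻¹ lies in Kσ
  set s : E := γ + γ⁻¹ with hs_def
  have hσγinv : σ γ⁻¹ = γ := by rw [map_inv₀, hσγ, inv_inv]
  have hsKσ : s ∈ Kσ := by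
    rw [hmemKσ]
    refine ⟨add_mem hγK (inv_mem hγK), ?_⟩
    rw [map_add, hσγ, hσγinv, add_comm]
  -- quadratic relation
  have hquad : γ * γ = s * γ - 1 := by
    have h1 : γ⁻¹ * γ = 1 := inv_mul_cancel₀ hγ0
    rw [hs_def]
    linear_combination -h1
  -- x ^ Q = x for x ∈ Kσ
  have hpowKσ : ∀ x ∈ Kσ, x ^ Q = x := by
    intro x hx
    have := FiniteField.pow_card (⟨x, hx⟩ : Kσ)
    have := congrArg Subtype.val this
    simpa [← hQc, Nat.card_eq_fintype_card] using this
  -- apply the Frobenius x ↦ x ^ Q to the quadratic relation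
  have hγQq : γ ^ Q * γ ^ Q = s * γ ^ Q - 1 := by
    have h0 := congrArg (iterateFrobenius E p (k : ℕ)) hquad
    simp only [map_mul, map_sub, map_one, iterateFrobenius_def] at h0
    rw [← hQpk] at h0
    rwa [hpowKσ s hsKσ] at h0
  have hfac : (γ ^ Q - γ) * (γ ^ Q - γ⁻¹) = 0 := by
    have hinv : γ * γ⁻¹ = 1 := mul_inv_cancel₀ hγ0
    rw [hs_def] at hγQq
    linear_combination hγQq + hinv
  have hγQ1 : γ ^ (Q + 1) = 1 := by
    rcases mul_eq_zero.mp hfac with h | h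
    · exact absurd (sub_eq_zero.mp h) (by rw [← hQc] at *; exact aux_pow_card_ne Kσ γ hγKσ)
    · rw [pow_succ, sub_eq_zero.mp h, inv_mul_cancel₀ hγ0]
  -- |K| = Q²
  obtain ⟨R, hmemR, hcardR⟩ := aux_quadratic_subfield Kσ γ s 1
    hsKσ (one_mem Kσ) hquad hγKσ
  have hKR : K = R := by
    apply le_antisymm
    · rw [hK]
      refine Subfield.closure_le.mpr (Set.singleton_subset_iff.mpr ?_)
      exact (hmemR γ).mpr ⟨0, zero_mem _, 1, one_mem _, by ring⟩
    · intro x hx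
      obtain ⟨a, ha, b, hb, rfl⟩ := (hmemR x).mp hx
      exact add_mem (hKσK ha) (mul_mem (hKσK hb) hγK)
  have hcardK : Nat.card K = Q * Q := by rw [hKR, hcardR, hQc]
  -- |E| = |Fσ|²
  obtain ⟨g, hg⟩ := IsCyclic.exists_generator (α := Eˣ)
  set θ : E := (g : E) with hθdef
  have hgenE : ∀ x : E, x ≠ 0 → ∃ i : ℤ, x = θ ^ i := by
    intro x hx
    obtain ⟨i, hi⟩ := Subgroup.mem_zpowers_iff.mp (hg (Units.mk0 x hx))
    refine ⟨i, ?_⟩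
    have := congrArg (Units.val) hi
    simpa [Units.val_zpow_eq_zpow_val] using this.symm
  have hθFσ : θ ∉ Fσ := by
    intro hθ
    have hθfix : σ θ = θ := (hmemFσ θ).mp hθ
    apply hσ1
    ext x
    rcases eq_or_ne x 0 with rfl | hx
    · simp
    · obtain ⟨i, rfl⟩ := hgenE x hx
      simp [map_zpow₀, hθfix]
  obtain ⟨RE, hmemRE, hcardRE⟩ := aux_quadratic_subfield Fσ θ (θ + σ θ) (θ * σ θ)
    (by rw [hmemFσ, map_add, hσ2, add_comm])
    (by rw [hmemFσ, map_mul, hσ2, mul_comm])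
    (by ring)
    hθFσ
  have hREtop : RE = ⊤ := by
    rw [eq_top_iff]
    intro x _
    rcases eq_or_ne x 0 with rfl | hx
    · exact zero_mem RE
    · obtain ⟨i, rfl⟩ := hgenE x hx
      exact Subfield.zpow_mem RE ((hmemRE θ).mpr ⟨0, zero_mem _, 1, one_mem _, by ring⟩) i
  have hcardE : Nat.card E = Nat.card Fσ * Nat.card Fσ := by
    rw [← hcardRE, hREtop]
    exact (Nat.card_congr Subfield.topEquiv.toEquiv).symm
  -- finrank is odd
  set d : ℕ := Module.finrank K E with hd
  have : Fintype K := Fintype.ofFinite _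
  have hcardEd : Nat.card E = (Q * Q) ^ d := by
    rw [Nat.card_eq_fintype_card, Module.card_eq_pow_finrank (K := K) (V := E), ← hd,
      ← Nat.card_eq_fintype_card, hcardK]
  have hM : Nat.card Fσ = Q ^ d := by
    have h1 : Nat.card Fσ ^ 2 = (Q ^ d) ^ 2 := by
      rw [pow_two, pow_two, ← hcardE, hcardEd]
      ring
    exact Nat.pow_left_injective (by omega) h1
  have hdodd : Odd d := by
    by_contra hde
    rw [Nat.not_odd_iff_even] at hde
    obtain ⟨e, he⟩ := hde
    have hQQ : γ ^ (Q * Q) = γ := by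
      have hq2 : Q * Q = (Q + 1) * (Q - 1) + 1 := by
        cases Q with
        | zero => omega
        | succ m => simp [Nat.succ_sub_one]; ring
      rw [hq2, pow_add, pow_mul, hγQ1, one_pow, one_mul, pow_one]
    have hiter : ∀ m : ℕ, γ ^ ((Q * Q) ^ m) = γ := by
      intro m
      induction m with
      | zero => simp
      | succ m ih => rw [pow_succ, pow_mul, ih, hQQ]
    have hγFd : γ ^ (Nat.card Fσ) = γ := by
      have hde2 : Q ^ d = (Q * Q) ^ e := by
        rw [he, ← two_mul, pow_mul, pow_two]
      rw [hM, hde2]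
      exact hiter e
    exact aux_pow_card_ne Fσ γ hγFσ hγFd
  -- γ is a square in K
  have : Fintype K := Fintype.ofFinite _
  have hKcard : Fintype.card K = Q * Q := by
    rw [← Nat.card_eq_fintype_card, hcardK]
  set γ' : K := ⟨γ, hγK⟩ with hγ'
  have hγ'0 : γ' ≠ 0 := fun h => hγ0 (congrArg Subtype.val h)
  have hγ'Q1 : γ' ^ (Q + 1) = 1 := by
    apply Subtype.ext
    push_cast
    exact hγQ1
  have hcharK : ringChar K ≠ 2 := by
    have : ringChar (K : Type _) = p := by
      have := (inferInstance : CharP K p)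
      exact (ringChar.eq K p).symm ▸ rfl
    rw [this]
    rw [Nat.odd_iff] at hp
    omega
  have hsq : IsSquare γ' := by
    rw [FiniteField.isSquare_iff hcharK hγ'0]
    obtain ⟨t, ht⟩ := hQodd
    have h1 : Q * Q = 2 * ((Q + 1) * t) + 1 := by rw [ht]; ring
    rw [hKcard, h1, Nat.mul_add_div (by norm_num)]
    norm_num
    rw [pow_mul, hγ'Q1, one_pow]
  obtain ⟨c', hc'⟩ := hsq
  refine ⟨⟨γ, hγK, hσne⟩, fun h => hσne (h γ hγK), hdodd, hγQ1, c'.val, c'.2, ?_⟩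
  have := congrArg Subtype.val hc'
  push_cast at this
  exact this.symm
end

section
/- Let F be a finite field of odd characteristic, σ a non-trivial involutive automorphism of F with fixed field F′, and N : F → F′ the norm map t ↦ t·σ(t). Let V be a finite-dimensional F-vector space and B a non-degenerate (ε, σ)-Hermitian form on V for ε ∈ {±1}. Then the anisotropic part V₀ of a Witt decomposition of V satisfies dim_F V₀ ≤ 1. Equivalently, the Witt index of B is ⌊dim V/2⌋. -/
/-!
Over a finite field the norm `a ↦ a * σ a` maps onto the fixed field of `σ`. If `v` is
anisotropic and `w` is orthogonal to `v`, then `-B w w / B v v` is fixed by `σ`, hence a norm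
`a * σ a`, and `a • v + w` is isotropic: so anisotropic subspaces have dimension at most one.
Since `σ ≠ id`, a subspace on which `B x x` vanishes is totally isotropic, so has dimension at
most `n / 2`; for a maximal one `W`, a complement of `W` in `W^⊥` is anisotropic, which gives
`n ≤ 2 dim W + 1`.
-/

open Module

section

variable {F : Type*} [Field F] {σ : F →+* F}

-- Hilbert 90, with the solution `c = σ b + u * b` for a suitable `b`.
theorem exists_ne_zero_mul_apply_eq_of_mul_apply_eq_one [RingHomInvPair σ σ]
    (hσ : σ ≠ RingHom.id F) {u : F} (hu : u * σ u = 1) : ∃ c ≠ 0, u * σ c = c := by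
  obtain ⟨b, hb⟩ : ∃ b, σ b + u * b ≠ 0 := by
    by_contra! h
    have hu1 : u = -1 := by linear_combination (by simpa using h 1 : 1 + u = 0)
    exact hσ (RingHom.ext fun b => by linear_combination h b - b * hu1)
  refine ⟨_, hb, ?_⟩
  rw [map_add, map_mul, RingHomInvPair.comp_apply_eq]
  linear_combination σ b * hu

theorem exists_mul_apply_eq_of_apply_eq [Finite F] [RingHomInvPair σ σ]
    (hσ : σ ≠ RingHom.id F) {x : F} (hx : σ x = x) : ∃ a, a * σ a = x := by
  rcases eq_or_ne x 0 with rfl | hx0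
  · exact ⟨0, zero_mul _⟩
  let σu : Fˣ →* Fˣ := Units.map σ
  let norm : Fˣ →* Fˣ := MonoidHom.id Fˣ * σu
  let ratio : Fˣ →* Fˣ := MonoidHom.id Fˣ / σu
  have mem_ker_ratio {a : Fˣ} : a ∈ ratio.ker ↔ σ a = a := by
    simp only [MonoidHom.mem_ker, ratio, MonoidHom.div_apply, div_eq_one, Units.ext_iff]
    exact eq_comm
  have range_le : norm.range ≤ ratio.ker := by
    rintro _ ⟨a, rfl⟩
    simp [mem_ker_ratio, norm, σu, mul_comm]
  have ker_le : norm.ker ≤ ratio.range := by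
    intro u hu_ker
    have hu : (u : F) * σ u = 1 := by simpa [norm, σu, Units.ext_iff] using hu_ker
    obtain ⟨c, hc0, hc⟩ := exists_ne_zero_mul_apply_eq_of_mul_apply_eq_one hσ hu
    refine ⟨Units.mk0 c hc0, Units.ext ?_⟩
    simp only [ratio, σu, MonoidHom.div_apply, MonoidHom.id_apply, Units.val_div_eq_div_val,
      Units.val_mk0, Units.coe_map, MonoidHom.coe_coe]
    rw [div_eq_iff ((map_ne_zero σ).mpr hc0)]
    exact hc.symm
  -- `|ker norm| * |range norm| = |ker ratio| * |range ratio|` and both inclusions above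
  -- force `range norm = ker ratio`
  have card_norm := norm.ker.card_mul_index
  have card_ratio := ratio.ker.card_mul_index
  rw [Subgroup.index_ker] at card_norm card_ratio
  have := Subgroup.card_le_of_le range_le
  have := Subgroup.card_le_of_le ker_le
  have : Nat.card ratio.ker ≤ Nat.card norm.range := by
    nlinarith [Nat.card_pos (α := norm.ker), Nat.card_pos (α := ratio.range)]
  have range_eq : norm.range = ratio.ker := Subgroup.eq_of_le_of_card_ge range_le this
  obtain ⟨a, ha⟩ : Units.mk0 x hx0 ∈ norm.range :=
    range_eq ▸ mem_ker_ratio.mpr (by simpa using hx)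
  exact ⟨a, by simpa [norm, σu, Units.ext_iff] using ha⟩

variable {V : Type*} [AddCommGroup V] [Module F V] (C : V →ₛₗ[σ] V →ₗ[F] F)

theorem le_orthogonalBilin_of_apply_self_eq_zero (hσ : σ ≠ RingHom.id F) {W : Submodule F V}
    (hW : ∀ x ∈ W, C x x = 0) : W ≤ W.orthogonalBilin C := by
  obtain ⟨t, ht⟩ : ∃ t, σ t ≠ t := by
    by_contra! h
    exact hσ (RingHom.ext h)
  intro y hy x hx
  have h₁ := hW (x + y) (add_mem hx hy)
  have h₂ := hW (t • x + y) (add_mem (W.smul_mem t hx) hy)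
  simp only [map_add, map_smulₛₗ, LinearMap.add_apply, LinearMap.smul_apply, smul_eq_mul,
    hW x hx, hW y hy] at h₁ h₂
  have : (σ t - t) * C x y = 0 := by linear_combination h₂ - t * h₁
  exact (mul_eq_zero.mp this).resolve_left (sub_ne_zero.mpr ht)

theorem finrank_add_finrank_orthogonalBilin [RingHomInvPair σ σ] [FiniteDimensional F V]
    (hC : C.SeparatingLeft) (W : Submodule F V) :
    finrank F W + finrank F (W.orthogonalBilin C) = finrank F V := by
  have horth : W.orthogonalBilin C = (W.map C).dualCoannihilator := by
    ext y
    simp [Submodule.mem_dualCoannihilator]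
  have hmap : finrank F (W.map C) = finrank F W := by
    have hinj : Function.Injective C :=
      LinearMap.ker_eq_bot.mp (C.separatingLeft_iff_ker_eq_bot.mp hC)
    let e := Submodule.equivMapOfInjective C hinj W
    have := lift_rank_eq_of_equiv_equiv σ e.toAddEquiv
      ⟨σ.injective, RingHomSurjective.is_surjective⟩ e.map_smulₛₗ
    simpa [finrank] using congrArg Cardinal.toNat this.symm
  rw [horth, ← hmap]
  exact Subspace.finrank_add_finrank_dualCoannihilator_eq _

theorem isRefl_of_map_apply_eq_mul_apply {ε : F} (hε : ε ≠ 0)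
    (hC : ∀ x y, σ (C x y) = ε * C y x) : C.IsRefl := fun x y hxy => by
  simpa [hxy, hε] using (hC x y).symm

theorem finrank_le_one_of_anisotropic [Finite F] [RingHomInvPair σ σ] (hσ : σ ≠ RingHom.id F)
    {ε : F} (hε : ε ≠ 0) (hC : ∀ x y, σ (C x y) = ε * C y x) {W : Submodule F V}
    (hW : ∀ x ∈ W, C x x = 0 → x = 0) : finrank F W ≤ 1 := by
  rcases eq_or_ne W ⊥ with rfl | hW0
  · simp
  obtain ⟨v, hv, hv0⟩ := W.exists_mem_ne_zero_of_ne_bot hW0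
  have hα : C v v ≠ 0 := fun h => hv0 (hW v hv h)
  suffices Function.Injective ((C v).domRestrict W) by
    simpa using LinearMap.finrank_le_finrank_of_injective this
  refine (injective_iff_map_eq_zero _).mpr fun ⟨w, hw⟩ hvw => ?_
  replace hvw : C v w = 0 := hvw
  have hwv : C w v = 0 := isRefl_of_map_apply_eq_mul_apply C hε hC v w hvw
  -- `a • v + w` is isotropic as soon as `σ a * a = - C w w / C v v`, a value fixed by `σ`
  obtain ⟨a, ha⟩ := exists_mul_apply_eq_of_apply_eq hσ (x := -(C w w / C v v)) (by
    rw [map_neg, map_div₀, hC, hC, mul_div_mul_left _ _ hε])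
  have hnorm : a * σ a * C v v = -C w w := by rw [ha]; field_simp
  have hiso : a • v + w = 0 := by
    refine hW _ (add_mem (W.smul_mem a hv) hw) ?_
    simp only [map_add, map_smulₛₗ, LinearMap.add_apply, LinearMap.smul_apply, smul_eq_mul,
      hvw, hwv]
    linear_combination hnorm
  have ha0 : a = 0 := by
    simpa [hvw, hα] using congrArg (C v) hiso
  simpa [ha0] using hiso

theorem apply_self_eq_zero_of_mem_sup_span_singleton (hC : C.IsRefl) {W : Submodule F V}
    (hW : ∀ x ∈ W, C x x = 0) {v : V} (hv : v ∈ W.orthogonalBilin C) (hvv : C v v = 0) :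
    ∀ x ∈ W ⊔ F ∙ v, C x x = 0 := by
  intro x hx
  obtain ⟨w, hw, _, hav, rfl⟩ := Submodule.mem_sup.mp hx
  obtain ⟨a, rfl⟩ := Submodule.mem_span_singleton.mp hav
  have hwv : C w v = 0 := hv w hw
  simp [hW w hw, hvv, hwv, hC w v hwv]

theorem mem_of_maximal_of_mem_orthogonalBilin (hC : C.IsRefl) {W : Submodule F V}
    (hW : Maximal (fun W : Submodule F V => ∀ x ∈ W, C x x = 0) W) {v : V}
    (hv : v ∈ W.orthogonalBilin C) (hvv : C v v = 0) : v ∈ W :=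
  hW.2 (apply_self_eq_zero_of_mem_sup_span_singleton C hC hW.1 hv hvv) le_sup_left
    (Submodule.mem_sup_right (Submodule.mem_span_singleton_self v))

theorem finrank_le_two_mul_finrank_add_one_of_maximal [Finite F] [RingHomInvPair σ σ]
    [FiniteDimensional F V] (hσ : σ ≠ RingHom.id F) {ε : F} (hε : ε ≠ 0)
    (hC : ∀ x y, σ (C x y) = ε * C y x) (hsep : C.SeparatingLeft) {W : Submodule F V}
    (hW : Maximal (fun W : Submodule F V => ∀ x ∈ W, C x x = 0) W) :
    finrank F V ≤ 2 * finrank F W + 1 := by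
  obtain ⟨U, hU⟩ := W.exists_isCompl
  -- `U ⊓ W^⊥` meets `W` trivially, so it is anisotropic by maximality of `W`
  have hanis : ∀ x ∈ U ⊓ W.orthogonalBilin C, C x x = 0 → x = 0 := fun x hx hxx =>
    Submodule.disjoint_def.mp hU.disjoint x
      (mem_of_maximal_of_mem_orthogonalBilin C (isRefl_of_map_apply_eq_mul_apply C hε hC) hW
        hx.2 hxx) hx.1
  have := finrank_le_one_of_anisotropic C hσ hε hC hanis
  have := Submodule.finrank_sup_add_finrank_inf_eq U (W.orthogonalBilin C)
  have := Submodule.finrank_le (U ⊔ W.orthogonalBilin C)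
  have := Submodule.finrank_add_eq_of_isCompl hU
  have := finrank_add_finrank_orthogonalBilin C hsep W
  omega

theorem isGreatest_finrank_isotropic [Finite F] [RingHomInvPair σ σ]
    [FiniteDimensional F V] (hσ : σ ≠ RingHom.id F) {ε : F} (hε : ε ≠ 0)
    (hC : ∀ x y, σ (C x y) = ε * C y x) (hsep : C.SeparatingLeft) :
    IsGreatest {d | ∃ W : Submodule F V, finrank F W = d ∧ ∀ x ∈ W, C x x = 0}
      (finrank F V / 2) := by
  have upper {W : Submodule F V} (hW : ∀ x ∈ W, C x x = 0) :
      2 * finrank F W ≤ finrank F V := by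
    have := Submodule.finrank_mono (le_orthogonalBilin_of_apply_self_eq_zero C hσ hW)
    have := finrank_add_finrank_orthogonalBilin C hsep W
    omega
  obtain ⟨W, -, hW⟩ := exists_maximal_ge_of_wellFoundedGT
    (fun W : Submodule F V => ∀ x ∈ W, C x x = 0) ⊥ (by simp)
  have := finrank_le_two_mul_finrank_add_one_of_maximal C hσ hε hC hsep hW
  have := upper hW.1
  refine ⟨⟨W, by omega, hW.1⟩, ?_⟩
  rintro _ ⟨W', rfl, hW'⟩
  have := upper hW'
  omega

-- `B y x` rather than `B x y`: Mathlib's sesquilinear forms are semilinear in the first argument.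
def sesqFormOfHermitian (B : V → V → F) (haddl : ∀ v v' w, B (v + v') w = B v w + B v' w)
    (hsmull : ∀ (a : F) (v w : V), B (a • v) w = a * B v w) {ε : F} (hε : ε ≠ 0)
    (hherm : ∀ v w, ε * B v w = σ (B w v)) : V →ₛₗ[σ] V →ₗ[F] F :=
  LinearMap.mk₂'ₛₗ σ (RingHom.id F) (fun x y => B y x)
    (fun x₁ x₂ y => mul_left_cancel₀ hε <| by
      rw [mul_add, hherm, hherm, hherm, haddl, map_add])
    (fun c x y => mul_left_cancel₀ hε <| by
      rw [hherm, hsmull, map_mul, smul_eq_mul, ← hherm]; ring)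
    (fun x y₁ y₂ => haddl y₁ y₂ x) (fun c x y => hsmull c y x)

end

theorem stmt_10_general (F : Type*) [Field F] [Fintype F]
    (σ : F →+* F) (hσ2 : ∀ a, σ (σ a) = a) (hσ1 : σ ≠ RingHom.id F)
    (ε : F) (hε : ε = 1 ∨ ε = -1)
    (V : Type*) [AddCommGroup V] [Module F V] [FiniteDimensional F V]
    (B : V → V → F)
    (haddl : ∀ v v' w, B (v + v') w = B v w + B v' w)
    (hsmull : ∀ (a : F) (v w : V), B (a • v) w = a * B v w)
    (hherm : ∀ v w, ε * B v w = σ (B w v))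
    (hnd : ∀ v, (∀ w, B v w = 0) → v = 0) :
    (∀ V0 : Submodule F V, (∀ v ∈ V0, B v v = 0 → v = 0) →
      Module.finrank F V0 ≤ 1) ∧
    IsGreatest {d : ℕ | ∃ W : Submodule F V,
      Module.finrank F W = d ∧ ∀ v ∈ W, B v v = 0}
      (Module.finrank F V / 2) := by
  have hε0 : ε ≠ 0 := by rcases hε with rfl | rfl <;> norm_num
  have : RingHomInvPair σ σ := ⟨RingHom.ext hσ2, RingHom.ext hσ2⟩
  let C := sesqFormOfHermitian B haddl hsmull hε0 hherm
  have hC : ∀ x y, σ (C x y) = ε * C y x := fun x y => (hherm x y).symm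
  have hsep : C.SeparatingLeft := fun x hx =>
    hnd x fun w => isRefl_of_map_apply_eq_mul_apply C hε0 hC x w (hx w)
  exact ⟨fun V0 hV0 => finrank_le_one_of_anisotropic C hσ1 hε0 hC hV0,
    isGreatest_finrank_isotropic C hσ1 hε0 hC hsep⟩

/-- For a non-degenerate `(ε, σ)`-Hermitian form with `σ` a non-trivial involution
of a finite field of odd characteristic, any anisotropic subspace has dimension at
most 1; equivalently, the Witt index is `⌊dim V / 2⌋`. -/
theorem stmt_10 (F : Type*) [Field F] [Fintype F]
    (p : ℕ) [Fact p.Prime] (hp : Odd p) [CharP F p]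
    (σ : F →+* F) (hσ2 : ∀ a, σ (σ a) = a) (hσ1 : σ ≠ RingHom.id F)
    (ε : F) (hε : ε = 1 ∨ ε = -1)
    (V : Type*) [AddCommGroup V] [Module F V] [FiniteDimensional F V]
    (B : V → V → F)
    (haddl : ∀ v v' w, B (v + v') w = B v w + B v' w)
    (hsmull : ∀ (a : F) (v w : V), B (a • v) w = a * B v w)
    (hherm : ∀ v w, ε * B v w = σ (B w v))
    (hnd : ∀ v, (∀ w, B v w = 0) → v = 0) :
    (∀ V0 : Submodule F V, (∀ v ∈ V0, B v v = 0 → v = 0) →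
      Module.finrank F V0 ≤ 1) ∧
    IsGreatest {d : ℕ | ∃ W : Submodule F V,
      Module.finrank F W = d ∧ ∀ v ∈ W, B v v = 0}
      (Module.finrank F V / 2) :=
  stmt_10_general F σ hσ2 hσ1 ε hε V B haddl hsmull hherm hnd
end
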